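/- Let ρ_rk2 = (1/2)(Σ0 + x3 Σ3), where Σ0 = (1/2)(1 + u σ3 + v τ3 + z1 σ1τ1 + z2 σ2τ2) and Σ3 = (1/2)(v σ3 + u τ3 − z2 σ1τ1 − z1 σ2τ2 + σ3τ3) with u = cos γ1 cos γ2, v = sin γ1 sin γ2, z1 = sin γ1 cos γ2, z2 = cos γ1 sin γ2. For pure qubit states ρ1, ρ2 with Bloch vectors (a,b,c) and s2, one has tr(ρ_rk2 ρ1⊗ρ2) = (1/4)(1 + c cos γ1 cos γ2 + c x3 sin γ1 sin γ2 + w·s2), where w = (a(cos γ2 sin γ1 − x3 cos γ1 sin γ2), b(−x3 cos γ2 sin γ1 + cos γ1 sin γ2), c x3 + x3 cos γ1 cos γ2 + sin γ1 sin γ2). Hence max over ρ2 of tr(ρ_rk2 ρ1⊗ρ2) = (1/4)(1 + c cos γ1 cos γ2 + c x3 sin γ1 sin γ2 + |w|). -/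

import Mathlib

/-! Expanding the product entrywise, `tr(ρ_rk2 (ρ1 ⊗ ρ2))` is affine in the Bloch vector `s2`
of `ρ2`, with linear part `w · s2 / 4`. By Cauchy–Schwarz `w · s2 ≤ |w|` on the unit sphere,
with equality at `s2 = w / |w|` (any unit vector if `w = 0`). -/

open Real Matrix Kronecker

noncomputable def pauli1 : Matrix (Fin 2) (Fin 2) ℂ := !![0, 1; 1, 0]
noncomputable def pauli2 : Matrix (Fin 2) (Fin 2) ℂ := !![0, -Complex.I; Complex.I, 0]
noncomputable def pauli3 : Matrix (Fin 2) (Fin 2) ℂ := !![1, 0; 0, -1]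

noncomputable def Sigma0 (γ1 γ2 : ℝ) : Matrix (Fin 2 × Fin 2) (Fin 2 × Fin 2) ℂ :=
  (1/2 : ℂ) • (1 + ((Real.cos γ1 * Real.cos γ2 : ℝ) : ℂ) • (pauli3 ⊗ₖ 1)
    + ((Real.sin γ1 * Real.sin γ2 : ℝ) : ℂ) • ((1 : Matrix (Fin 2) (Fin 2) ℂ) ⊗ₖ pauli3)
    + ((Real.sin γ1 * Real.cos γ2 : ℝ) : ℂ) • (pauli1 ⊗ₖ pauli1)
    + ((Real.cos γ1 * Real.sin γ2 : ℝ) : ℂ) • (pauli2 ⊗ₖ pauli2))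

noncomputable def Sigma3 (γ1 γ2 : ℝ) : Matrix (Fin 2 × Fin 2) (Fin 2 × Fin 2) ℂ :=
  (1/2 : ℂ) • (((Real.sin γ1 * Real.sin γ2 : ℝ) : ℂ) • (pauli3 ⊗ₖ 1)
    + ((Real.cos γ1 * Real.cos γ2 : ℝ) : ℂ) • ((1 : Matrix (Fin 2) (Fin 2) ℂ) ⊗ₖ pauli3)
    - ((Real.cos γ1 * Real.sin γ2 : ℝ) : ℂ) • (pauli1 ⊗ₖ pauli1)
    - ((Real.sin γ1 * Real.cos γ2 : ℝ) : ℂ) • (pauli2 ⊗ₖ pauli2)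
    + pauli3 ⊗ₖ pauli3)

/-- The rank-two state with Bloch vector `(0,0,x3)` in the canonical subspace. -/
noncomputable def rhoRk2 (γ1 γ2 x3 : ℝ) : Matrix (Fin 2 × Fin 2) (Fin 2 × Fin 2) ℂ :=
  (1/2 : ℂ) • (Sigma0 γ1 γ2 + (x3 : ℂ) • Sigma3 γ1 γ2)

/-- The qubit state with Bloch vector `(a,b,c)`. -/
noncomputable def qubit (a b c : ℝ) : Matrix (Fin 2) (Fin 2) ℂ :=
  (1/2 : ℂ) • (1 + (a : ℂ) • pauli1 + (b : ℂ) • pauli2 + (c : ℂ) • pauli3)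

lemma trace_rhoRk2_mul_kronecker_qubit (γ1 γ2 x3 a b c a2 b2 c2 : ℝ) :
    trace (rhoRk2 γ1 γ2 x3 * (qubit a b c ⊗ₖ qubit a2 b2 c2))
      = (((1/4) * (1 + c * cos γ1 * cos γ2 + c * x3 * sin γ1 * sin γ2
          + (a * (cos γ2 * sin γ1 - x3 * cos γ1 * sin γ2) * a2
            + b * (-(x3 * cos γ2 * sin γ1) + cos γ1 * sin γ2) * b2
            + (c * x3 + x3 * cos γ1 * cos γ2 + sin γ1 * sin γ2) * c2)) : ℝ) : ℂ) := by
  simp only [rhoRk2, Sigma0, Sigma3, qubit, pauli1, pauli2, pauli3, trace, diag, mul_apply,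
    Fintype.sum_prod_type, Fin.sum_univ_two, kroneckerMap_apply, Matrix.smul_apply, Matrix.add_apply,
    Matrix.sub_apply, one_apply]
  apply Complex.ext <;> simp <;> ring

lemma dot_le_sqrt_sum_sq {w1 w2 w3 s1 s2 s3 : ℝ} (hs : s1^2 + s2^2 + s3^2 = 1) :
    w1 * s1 + w2 * s2 + w3 * s3 ≤ √(w1^2 + w2^2 + w3^2) := by
  apply Real.le_sqrt_of_sq_le
  have lagrange : (w1^2 + w2^2 + w3^2) * (s1^2 + s2^2 + s3^2) - (w1 * s1 + w2 * s2 + w3 * s3)^2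
      = (w1 * s2 - w2 * s1)^2 + (w1 * s3 - w3 * s1)^2 + (w2 * s3 - w3 * s2)^2 := by ring
  rw [hs] at lagrange
  nlinarith [lagrange]

lemma isGreatest_dot_unit_sphere (w1 w2 w3 : ℝ) :
    IsGreatest {d | ∃ s1 s2 s3 : ℝ, s1^2 + s2^2 + s3^2 = 1 ∧ d = w1 * s1 + w2 * s2 + w3 * s3}
      √(w1^2 + w2^2 + w3^2) := by
  refine ⟨?_, fun d ⟨s1, s2, s3, hs, hd⟩ => hd ▸ dot_le_sqrt_sum_sq hs⟩
  set W := √(w1^2 + w2^2 + w3^2)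
  have hW2 : W ^ 2 = w1^2 + w2^2 + w3^2 := Real.sq_sqrt (by positivity)
  obtain hW0 | hW0 := (show 0 ≤ W from Real.sqrt_nonneg _).eq_or_lt
  · have : w1 = 0 ∧ w2 = 0 ∧ w3 = 0 := by
      refine ⟨?_, ?_, ?_⟩ <;> nlinarith [sq_nonneg w1, sq_nonneg w2, sq_nonneg w3]
    exact ⟨1, 0, 0, by norm_num, by simp [this, ← hW0]⟩
  · refine ⟨w1 / W, w2 / W, w3 / W, ?_, ?_⟩ <;> field_simp <;> linarith

theorem stmt16_general (γ1 γ2 x3 a b c : ℝ) :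
    let w1 := a * (Real.cos γ2 * Real.sin γ1 - x3 * Real.cos γ1 * Real.sin γ2)
    let w2 := b * (-(x3 * Real.cos γ2 * Real.sin γ1) + Real.cos γ1 * Real.sin γ2)
    let w3 := c * x3 + x3 * Real.cos γ1 * Real.cos γ2 + Real.sin γ1 * Real.sin γ2
    ((∀ a2 b2 c2 : ℝ, a2^2 + b2^2 + c2^2 = 1 →
        Matrix.trace (rhoRk2 γ1 γ2 x3 * (qubit a b c ⊗ₖ qubit a2 b2 c2))
          = (((1/4) * (1 + c * Real.cos γ1 * Real.cos γ2 + c * x3 * Real.sin γ1 * Real.sin γ2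
              + (w1 * a2 + w2 * b2 + w3 * c2)) : ℝ) : ℂ)) ∧
      IsGreatest {x : ℝ | ∃ a2 b2 c2 : ℝ, a2^2 + b2^2 + c2^2 = 1 ∧
          (x : ℂ) = Matrix.trace (rhoRk2 γ1 γ2 x3 * (qubit a b c ⊗ₖ qubit a2 b2 c2))}
        ((1/4) * (1 + c * Real.cos γ1 * Real.cos γ2 + c * x3 * Real.sin γ1 * Real.sin γ2
          + Real.sqrt (w1^2 + w2^2 + w3^2)))) := by
  intro w1 w2 w3
  have htrace := trace_rhoRk2_mul_kronecker_qubit γ1 γ2 x3 a b c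
  obtain ⟨⟨a2, b2, c2, hunit, hdot⟩, hle⟩ := isGreatest_dot_unit_sphere w1 w2 w3
  refine ⟨fun a2 b2 c2 _ => htrace a2 b2 c2, ⟨a2, b2, c2, hunit, by rw [htrace, hdot]⟩, ?_⟩
  rintro x ⟨a2, b2, c2, hunit, hx⟩
  rw [htrace, Complex.ofReal_inj] at hx
  have := hle ⟨a2, b2, c2, hunit, rfl⟩
  linarith

theorem stmt16 (γ1 γ2 x3 a b c : ℝ) (hs1 : a^2 + b^2 + c^2 = 1) :
    let w1 := a * (Real.cos γ2 * Real.sin γ1 - x3 * Real.cos γ1 * Real.sin γ2)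
    let w2 := b * (-(x3 * Real.cos γ2 * Real.sin γ1) + Real.cos γ1 * Real.sin γ2)
    let w3 := c * x3 + x3 * Real.cos γ1 * Real.cos γ2 + Real.sin γ1 * Real.sin γ2
    ((∀ a2 b2 c2 : ℝ, a2^2 + b2^2 + c2^2 = 1 →
        Matrix.trace (rhoRk2 γ1 γ2 x3 * (qubit a b c ⊗ₖ qubit a2 b2 c2))
          = (((1/4) * (1 + c * Real.cos γ1 * Real.cos γ2 + c * x3 * Real.sin γ1 * Real.sin γ2
              + (w1 * a2 + w2 * b2 + w3 * c2)) : ℝ) : ℂ)) ∧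
      IsGreatest {x : ℝ | ∃ a2 b2 c2 : ℝ, a2^2 + b2^2 + c2^2 = 1 ∧
          (x : ℂ) = Matrix.trace (rhoRk2 γ1 γ2 x3 * (qubit a b c ⊗ₖ qubit a2 b2 c2))}
        ((1/4) * (1 + c * Real.cos γ1 * Real.cos γ2 + c * x3 * Real.sin γ1 * Real.sin γ2
          + Real.sqrt (w1^2 + w2^2 + w3^2)))) :=
  stmt16_general γ1 γ2 x3 a b c
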